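/- Let H : ℝ^d → ℝ be convex and L-Lipschitz, and for λ ∈ (0,1] let H_λ be its Moreau–Yosida regularization. Let m₁, m₂ ≥ 0 with m₁, m₂ ≤ M, and p₁, p₂ ∈ ℝ^d, and b ∈ ∂H(p₁). Then m₂·(H_λ(p₂) - H(p₁) + ∇H_λ(p₂)·(p₁ - p₂)) + m₁·(H(p₁) - H_λ(p₂) + b·(p₂ - p₁)) ≤ M·L²·λ. -/

import Mathlib

/-!
The first residual is nonpositive: `H_λ` is convex (an infimum over `q` of a function jointly convex
in `(p, q)`), so its gradient inequality at `p₂` together with `H_λ ≤ H` bounds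
`H_λ(p₂) + ∇H_λ(p₂)·(p₁ - p₂)` by `H(p₁)`. The second residual is at most `L²λ/2`: the subgradient
inequality gives `H(p₁) + b·(p₂ - p₁) ≤ H(p₂)`, and Lipschitz continuity with Young's inequality
`L r ≤ r²/(2λ) + L²λ/2` gives `H ≤ H_λ + L²λ/2`.
-/

open Set
open scoped RealInnerProductSpace

theorem mul_le_sq_div_add_sq_mul {lam : ℝ} (hlam : 0 < lam) (L r : ℝ) :
    L * r ≤ r ^ 2 / (2 * lam) + L ^ 2 * lam / 2 := by
  have : 0 ≤ (r - L * lam) ^ 2 / (2 * lam) := by positivity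
  have expand : (r - L * lam) ^ 2 / (2 * lam) = r ^ 2 / (2 * lam) + L ^ 2 * lam / 2 - L * r := by
    field_simp
    ring
  linarith

theorem ConvexOn.iInf_right {E F : Type*} [AddCommGroup E] [Module ℝ E] [AddCommGroup F]
    [Module ℝ F] {φ : E → F → ℝ} (hφ : ConvexOn ℝ univ fun z : E × F => φ z.1 z.2)
    (hbdd : ∀ x, BddBelow (range (φ x))) :
    ConvexOn ℝ univ fun x => ⨅ y, φ x y := by
  refine ⟨convex_univ, fun x _ x' _ a b ha hb hab => ?_⟩
  simp only [smul_eq_mul, Real.mul_iInf_of_nonneg ha, Real.mul_iInf_of_nonneg hb]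
  refine le_ciInf_add_ciInf fun y y' => ciInf_le_of_le (hbdd _) (a • y + b • y') ?_
  simpa using hφ.2 (mem_univ (x, y)) (mem_univ (x', y')) ha hb hab

theorem ConvexOn.add_le_of_hasFDerivAt {E : Type*} [NormedAddCommGroup E] [NormedSpace ℝ E]
    {s : Set E} {f : E → ℝ} {f' : E →L[ℝ] ℝ} {x y : E} (hf : ConvexOn ℝ s f) (hx : x ∈ s)
    (hy : y ∈ s) (hf' : HasFDerivAt f f' x) : f x + f' (y - x) ≤ f y := by
  have hderiv : HasDerivAt (f ∘ (AffineMap.lineMap x y : ℝ →ᵃ[ℝ] E)) (f' (y - x)) 0 := by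
    rw [← AffineMap.lineMap_apply_zero (k := ℝ) x y] at hf'
    exact hf'.comp_hasDerivAt 0 AffineMap.hasDerivAt_lineMap
  have key := (hf.comp_affineMap _).le_slope_of_hasDerivAt (by simpa using hx) (by simpa using hy)
    zero_lt_one hderiv
  simp only [slope_def_field, Function.comp_apply, AffineMap.lineMap_apply_zero,
    AffineMap.lineMap_apply_one, sub_zero, div_one] at key
  linarith

theorem ConvexOn.add_inner_le_of_hasGradientAt {E : Type*} [NormedAddCommGroup E]
    [InnerProductSpace ℝ E] [CompleteSpace E] {s : Set E} {f : E → ℝ} {g x y : E}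
    (hf : ConvexOn ℝ s f) (hx : x ∈ s) (hy : y ∈ s) (hg : HasGradientAt f g x) :
    f x + ⟪g, y - x⟫ ≤ f y := by
  simpa using hf.add_le_of_hasFDerivAt hx hy hg.hasFDerivAt

noncomputable def moreauEnvelope {E : Type*} [NormedAddCommGroup E] (f : E → ℝ) (lam : ℝ)
    (p : E) : ℝ :=
  ⨅ q, f q + ‖q - p‖ ^ 2 / (2 * lam)

section MoreauEnvelope

variable {E : Type*} [NormedAddCommGroup E] {f : E → ℝ} {L lam : ℝ}

theorem sub_le_add_sq_div_of_lipschitz (hlam : 0 < lam)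
    (hf : ∀ p q, |f p - f q| ≤ L * ‖p - q‖) (p q : E) :
    f p - L ^ 2 * lam / 2 ≤ f q + ‖q - p‖ ^ 2 / (2 * lam) := by
  have hpq := (abs_le.mp (hf p q)).2
  have := mul_le_sq_div_add_sq_mul hlam L ‖q - p‖
  rw [norm_sub_rev] at hpq
  linarith

theorem bddBelow_range_moreauEnvelope (hlam : 0 < lam)
    (hf : ∀ p q, |f p - f q| ≤ L * ‖p - q‖) (p : E) :
    BddBelow (range fun q => f q + ‖q - p‖ ^ 2 / (2 * lam)) :=
  ⟨_, forall_mem_range.2 (sub_le_add_sq_div_of_lipschitz hlam hf p)⟩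

theorem moreauEnvelope_le {p : E}
    (hbdd : BddBelow (range fun q => f q + ‖q - p‖ ^ 2 / (2 * lam))) :
    moreauEnvelope f lam p ≤ f p :=
  (ciInf_le hbdd p).trans_eq (by simp)

theorem sub_le_moreauEnvelope (hlam : 0 < lam) (hf : ∀ p q, |f p - f q| ≤ L * ‖p - q‖) (p : E) :
    f p - L ^ 2 * lam / 2 ≤ moreauEnvelope f lam p :=
  le_ciInf (sub_le_add_sq_div_of_lipschitz hlam hf p)

theorem ConvexOn.moreauEnvelope [NormedSpace ℝ E] (hf : ConvexOn ℝ univ f) (hlam : 0 ≤ lam)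
    (hbdd : ∀ p, BddBelow (range fun q => f q + ‖q - p‖ ^ 2 / (2 * lam))) :
    ConvexOn ℝ univ (moreauEnvelope f lam) := by
  have hsq : ConvexOn ℝ univ fun z : E × E => ‖z.2 - z.1‖ ^ 2 / (2 * lam) := by
    have := (((convexOn_norm convex_univ).pow (fun _ _ => norm_nonneg _) 2).comp_linearMap
      (LinearMap.snd ℝ E E - LinearMap.fst ℝ E E)).smul (c := (2 * lam)⁻¹) (by positivity)
    simpa [div_eq_inv_mul] using this
  exact ConvexOn.iInf_right (φ := fun p q => f q + ‖q - p‖ ^ 2 / (2 * lam))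
    ((hf.comp_linearMap (LinearMap.snd ℝ E E)).add hsq) hbdd

end MoreauEnvelope

theorem mixed_residual_bound_general (d : ℕ)
    (H : EuclideanSpace ℝ (Fin d) → ℝ) (L lam M : ℝ)
    (hlam : lam ∈ Set.Ioc (0 : ℝ) 1)
    (hconv : ConvexOn ℝ Set.univ H)
    (hlip : ∀ p q, |H p - H q| ≤ L * ‖p - q‖)
    (Hlam : EuclideanSpace ℝ (Fin d) → ℝ)
    (hHlam : ∀ p, Hlam p = ⨅ q : EuclideanSpace ℝ (Fin d),
      (H q + ‖q - p‖ ^ 2 / (2 * lam)))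
    (gradHlam : EuclideanSpace ℝ (Fin d) → EuclideanSpace ℝ (Fin d))
    (hgrad : ∀ p, HasGradientAt Hlam (gradHlam p) p)
    (m₁ m₂ : ℝ) (hm₁ : m₁ ∈ Set.Icc (0 : ℝ) M) (hm₂ : m₂ ∈ Set.Icc (0 : ℝ) M)
    (p₁ p₂ b : EuclideanSpace ℝ (Fin d))
    (hb : ∀ q, H p₁ + ⟪b, q - p₁⟫ ≤ H q) :
    m₂ * (Hlam p₂ - H p₁ + ⟪gradHlam p₂, p₁ - p₂⟫)
      + m₁ * (H p₁ - Hlam p₂ + ⟪b, p₂ - p₁⟫) ≤ M * L ^ 2 * lam := by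
  obtain ⟨hlam₀, -⟩ := hlam
  have hHlam' : Hlam = moreauEnvelope H lam := funext hHlam
  have hbdd := bddBelow_range_moreauEnvelope hlam₀ hlip
  have hA : Hlam p₂ - H p₁ + ⟪gradHlam p₂, p₁ - p₂⟫ ≤ 0 := by
    have hconv_lam : ConvexOn ℝ univ Hlam := hHlam' ▸ hconv.moreauEnvelope hlam₀.le hbdd
    have hle : Hlam p₁ ≤ H p₁ := hHlam' ▸ moreauEnvelope_le (hbdd p₁)
    linarith [hconv_lam.add_inner_le_of_hasGradientAt (mem_univ p₂) (mem_univ p₁) (hgrad p₂)]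
  have hB : H p₁ - Hlam p₂ + ⟪b, p₂ - p₁⟫ ≤ L ^ 2 * lam / 2 := by
    have hge : H p₂ - L ^ 2 * lam / 2 ≤ Hlam p₂ := hHlam' ▸ sub_le_moreauEnvelope hlam₀ hlip p₂
    linarith [hb p₂]
  have hM : 0 ≤ M := hm₁.1.trans hm₁.2
  calc _ ≤ m₂ * 0 + m₁ * (L ^ 2 * lam / 2) :=
        add_le_add (mul_le_mul_of_nonneg_left hA hm₂.1) (mul_le_mul_of_nonneg_left hB hm₁.1)
    _ ≤ M * (L ^ 2 * lam / 2) := by simpa using mul_le_mul_of_nonneg_right hm₁.2 (by positivity)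
    _ ≤ M * L ^ 2 * lam := by linarith [mul_nonneg hM (by positivity : 0 ≤ L ^ 2 * lam)]

/-- Pointwise estimate underlying `‖m_k - m_{k,λ}‖ ≲ λ^{1/2}`: mixing the
regularized and unregularized convexity residuals costs at most `M L² λ`. -/
theorem mixed_residual_bound (d : ℕ)
    (H : EuclideanSpace ℝ (Fin d) → ℝ) (L lam M : ℝ) (hL : 0 ≤ L)
    (hlam : lam ∈ Set.Ioc (0 : ℝ) 1)
    (hconv : ConvexOn ℝ Set.univ H)
    (hlip : ∀ p q, |H p - H q| ≤ L * ‖p - q‖)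
    (Hlam : EuclideanSpace ℝ (Fin d) → ℝ)
    (hHlam : ∀ p, Hlam p = ⨅ q : EuclideanSpace ℝ (Fin d),
      (H q + ‖q - p‖ ^ 2 / (2 * lam)))
    (gradHlam : EuclideanSpace ℝ (Fin d) → EuclideanSpace ℝ (Fin d))
    (hgrad : ∀ p, HasGradientAt Hlam (gradHlam p) p)
    (m₁ m₂ : ℝ) (hm₁ : m₁ ∈ Set.Icc (0 : ℝ) M) (hm₂ : m₂ ∈ Set.Icc (0 : ℝ) M)
    (p₁ p₂ b : EuclideanSpace ℝ (Fin d))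
    (hb : ∀ q, H p₁ + ⟪b, q - p₁⟫ ≤ H q) :
    m₂ * (Hlam p₂ - H p₁ + ⟪gradHlam p₂, p₁ - p₂⟫)
      + m₁ * (H p₁ - Hlam p₂ + ⟪b, p₂ - p₁⟫) ≤ M * L ^ 2 * lam :=
  mixed_residual_bound_general d H L lam M hlam hconv hlip Hlam hHlam gradHlam hgrad m₁ m₂ hm₁ hm₂
    p₁ p₂ b hb
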